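/- arXiv:2205.07393 — 2 statements merged into one kernel-verified Lean document; each statement's English description precedes it below -/
import Mathlib

section
/- Let f : [0,T] → ℝ be continuously differentiable with derivative f' satisfying the Hölder condition |f'(t) - f'(s)| ≤ C̃|t-s|^γ for all s,t ∈ [0,T], for some γ ∈ (0,1] and C̃ > 0. Then the trapezoidal quadrature error satisfies |(f(0)+f(T))/2 - (1/T)∫₀^T f(ξ) dξ| ≤ C̃ T^{1+γ} / ((γ+2)(γ+3)). -/
/-!
Integrating by parts against the kernel `x - m`, `m = (a + b) / 2`, turns the trapezoid error
into `(1 / (b - a)) ∫ (x - m) f'(x) dx`. The kernel is odd about `m`, so the reflection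
`x ↦ a + b - x` gives `2 ∫ (x - m) f'(x) = ∫ (x - m) (f'(x) - f'(a + b - x))`, and the Hölder
bound `|f'(x) - f'(a + b - x)| ≤ C̃ (2 |x - m|) ^ γ` integrates to
`C̃ (b - a) ^ (γ + 2) / (2 (γ + 2))`.
The resulting error bound `C̃ T ^ (1 + γ) / (4 (γ + 2))` is the claimed one when `γ = 1`
and sharper when `γ < 1`.
-/

open MeasureTheory intervalIntegral Set Filter Topology
open scoped Interval

theorem continuousOn_of_dist_le_mul_rpow {α β : Type*} [PseudoMetricSpace α]
    [PseudoMetricSpace β] {g : α → β} {s : Set α} {C γ : ℝ} (hγ : 0 < γ)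
    (hg : ∀ x ∈ s, ∀ y ∈ s, dist (g y) (g x) ≤ C * dist y x ^ γ) : ContinuousOn g s := by
  intro x hx
  rw [ContinuousWithinAt, tendsto_iff_dist_tendsto_zero]
  have hbound : Tendsto (fun y ↦ C * dist y x ^ γ) (𝓝[s] x) (𝓝 0) := by
    have : Continuous fun y ↦ C * dist y x ^ γ := by fun_prop (disch := exact hγ.le)
    simpa [Real.zero_rpow hγ.ne'] using this.continuousWithinAt (s := s) (x := x) |>.tendsto
  exact squeeze_zero' (.of_forall fun _ ↦ dist_nonneg)
    (eventually_nhdsWithin_of_forall fun y hy ↦ hg x hx y hy) hbound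

theorem integral_sub_midpoint_mul_eq_trapezoid_sub_integral {a b : ℝ} {f f' : ℝ → ℝ}
    (hf : ∀ x ∈ [[a, b]], HasDerivWithinAt f (f' x) [[a, b]] x)
    (hf' : IntervalIntegrable f' volume a b) :
    ∫ x in a..b, (x - (a + b) / 2) * f' x = (b - a) * ((f a + f b) / 2) - ∫ x in a..b, f x := by
  rw [integral_mul_deriv_eq_deriv_mul_of_hasDerivWithinAt
    (u := fun x ↦ x - (a + b) / 2)
    (fun x _ ↦ ((hasDerivAt_id x).sub_const ((a + b) / 2)).hasDerivWithinAt) hf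
    intervalIntegrable_const hf']
  simp only [one_mul]
  ring

theorem two_mul_integral_sub_midpoint_mul {a b : ℝ} {g : ℝ → ℝ}
    (hg : IntervalIntegrable g volume a b) :
    2 * ∫ x in a..b, (x - (a + b) / 2) * g x =
      ∫ x in a..b, (x - (a + b) / 2) * (g x - g (a + b - x)) := by
  set w : ℝ → ℝ := fun x ↦ (x - (a + b) / 2) * g x
  have hw : IntervalIntegrable w volume a b := hg.continuousOn_mul (by fun_prop)
  have hw_reflect : IntervalIntegrable (fun x ↦ w (a + b - x)) volume a b := by
    simpa using (hw.comp_sub_left (a + b)).symm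
  have hreflect : ∫ x in a..b, w (a + b - x) = ∫ x in a..b, w x := by
    rw [integral_comp_sub_left]
    simp
  rw [two_mul]
  nth_rewrite 2 [← hreflect]
  rw [← integral_add hw hw_reflect]
  refine integral_congr fun x _ ↦ ?_
  simp only [w]
  ring

theorem integral_abs_sub_midpoint_rpow {a b p : ℝ} (hab : a ≤ b) (hp : 0 ≤ p) :
    ∫ x in a..b, |x - (a + b) / 2| ^ p = 2 * ((b - a) / 2) ^ (p + 1) / (p + 1) := by
  set h := (b - a) / 2
  have hh : 0 ≤ h := div_nonneg (sub_nonneg.2 hab) zero_le_two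
  have hcont : Continuous fun x : ℝ ↦ |x| ^ p := by fun_prop (disch := exact hp)
  rw [integral_comp_sub_right (fun x ↦ |x| ^ p), show a - (a + b) / 2 = -h by ring,
    show b - (a + b) / 2 = h by ring,
    ← integral_add_adjacent_intervals (b := 0) (hcont.intervalIntegrable _ _)
      (hcont.intervalIntegrable _ _)]
  have hleft : ∫ x in -h..0, |x| ^ p = ∫ x in 0..h, |x| ^ p := by
    simpa using (integral_comp_neg (fun x ↦ |x| ^ p) (a := 0) (b := h)).symm
  have hright : ∫ x in 0..h, |x| ^ p = h ^ (p + 1) / (p + 1) := by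
    have habs : EqOn (fun x ↦ |x| ^ p) (fun x ↦ x ^ p) [[0, h]] := fun x hx ↦ by
      rw [uIcc_of_le hh] at hx
      simp only [abs_of_nonneg hx.1]
    rw [integral_congr habs, integral_rpow (Or.inl (by linarith)), Real.zero_rpow (by linarith),
      sub_zero]
  rw [hleft, hright]
  ring

theorem abs_integral_sub_midpoint_mul_le {a b C γ : ℝ} {g : ℝ → ℝ} (hab : a ≤ b)
    (hγ : 0 ≤ γ) (hg_int : IntervalIntegrable g volume a b)
    (hg : ∀ x ∈ Icc a b, ∀ y ∈ Icc a b, |g y - g x| ≤ C * |y - x| ^ γ) :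
    |∫ x in a..b, (x - (a + b) / 2) * g x| ≤ C * (b - a) ^ (γ + 2) / (4 * (γ + 2)) := by
  have hpointwise : ∀ x ∈ Icc a b,
      |(x - (a + b) / 2) * (g x - g (a + b - x))| ≤
        C * 2 ^ γ * |x - (a + b) / 2| ^ (γ + 1) := by
    intro x hx
    have hreflect : a + b - x ∈ Icc a b := ⟨by linarith [hx.2], by linarith [hx.1]⟩
    have hdist : |x - (a + b - x)| = 2 * |x - (a + b) / 2| := by
      rw [← abs_two, ← abs_mul]; ring_nf
    calc |(x - (a + b) / 2) * (g x - g (a + b - x))|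
        ≤ |x - (a + b) / 2| * (C * |x - (a + b - x)| ^ γ) := by
          rw [abs_mul]; exact mul_le_mul_of_nonneg_left (hg _ hreflect x hx) (abs_nonneg _)
      _ = C * 2 ^ γ * |x - (a + b) / 2| ^ (γ + 1) := by
          rw [hdist, Real.mul_rpow zero_le_two (abs_nonneg _),
            Real.rpow_add_one' (abs_nonneg _) (by linarith)]
          ring
  have hbound_int : IntervalIntegrable (fun x ↦ C * 2 ^ γ * |x - (a + b) / 2| ^ (γ + 1))
      volume a b :=
    Continuous.intervalIntegrable (by fun_prop (disch := linarith)) _ _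
  have htwice : 2 * |∫ x in a..b, (x - (a + b) / 2) * g x| ≤
      C * 2 ^ γ * (2 * ((b - a) / 2) ^ (γ + 2) / (γ + 2)) := by
    calc 2 * |∫ x in a..b, (x - (a + b) / 2) * g x|
        = ‖∫ x in a..b, (x - (a + b) / 2) * (g x - g (a + b - x))‖ := by
          rw [← two_mul_integral_sub_midpoint_mul hg_int, Real.norm_eq_abs, abs_mul, abs_two]
      _ ≤ ∫ x in a..b, C * 2 ^ γ * |x - (a + b) / 2| ^ (γ + 1) :=
          norm_integral_le_of_norm_le hab
            (.of_forall fun x hx ↦ hpointwise x (Ioc_subset_Icc_self hx)) hbound_int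
      _ = C * 2 ^ γ * (2 * ((b - a) / 2) ^ (γ + 2) / (γ + 2)) := by
          rw [intervalIntegral.integral_const_mul, integral_abs_sub_midpoint_rpow hab (by linarith)]
          ring_nf
  have hclosed : C * 2 ^ γ * (2 * ((b - a) / 2) ^ (γ + 2) / (γ + 2)) =
      2 * (C * (b - a) ^ (γ + 2) / (4 * (γ + 2))) := by
    rw [Real.div_rpow (by linarith) zero_le_two, Real.rpow_add two_pos]
    field_simp
    norm_num
  linarith

theorem abs_trapezoid_error_le {a b C γ : ℝ} {f f' : ℝ → ℝ} (hab : a < b) (hγ : 0 < γ)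
    (hf : ∀ x ∈ Icc a b, HasDerivWithinAt f (f' x) (Icc a b) x)
    (hf' : ∀ s ∈ Icc a b, ∀ t ∈ Icc a b, |f' t - f' s| ≤ C * |t - s| ^ γ) :
    |(f a + f b) / 2 - (1 / (b - a)) * ∫ x in a..b, f x| ≤
      C * (b - a) ^ (γ + 1) / (4 * (γ + 2)) := by
  have hlen : 0 < b - a := sub_pos.2 hab
  have hf'_int : IntervalIntegrable f' volume a b := by
    refine ContinuousOn.intervalIntegrable ?_
    rw [uIcc_of_le hab.le]
    exact continuousOn_of_dist_le_mul_rpow hγ (by simpa only [Real.dist_eq] using hf')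
  have herror : (f a + f b) / 2 - (1 / (b - a)) * ∫ x in a..b, f x =
      (∫ x in a..b, (x - (a + b) / 2) * f' x) / (b - a) := by
    rw [integral_sub_midpoint_mul_eq_trapezoid_sub_integral (by rwa [uIcc_of_le hab.le]) hf'_int]
    field_simp
  rw [herror, abs_div, abs_of_pos hlen, div_le_iff₀ hlen]
  calc |∫ x in a..b, (x - (a + b) / 2) * f' x|
      ≤ C * (b - a) ^ (γ + 2) / (4 * (γ + 2)) :=
        abs_integral_sub_midpoint_mul_le hab.le hγ.le hf'_int hf'
    _ = C * (b - a) ^ (γ + 1) / (4 * (γ + 2)) * (b - a) := by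
        rw [show γ + 2 = γ + 1 + 1 by ring, Real.rpow_add_one hlen.ne']
        ring

theorem trapezoid_quadrature_error_general
    (T : ℝ) (hT : 0 < T) (γ : ℝ) (hγ0 : 0 < γ) (hγ1 : γ ≤ 1)
    (Ct : ℝ) (f f' : ℝ → ℝ)
    (hderiv : ∀ t ∈ Set.Icc (0:ℝ) T, HasDerivWithinAt f (f' t) (Set.Icc (0:ℝ) T) t)
    (hholder : ∀ s ∈ Set.Icc (0:ℝ) T, ∀ t ∈ Set.Icc (0:ℝ) T,
      |f' t - f' s| ≤ Ct * |t - s| ^ γ) :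
    |(f 0 + f T) / 2 - (1 / T) * ∫ ξ in (0:ℝ)..T, f ξ|
      ≤ Ct * T ^ (1 + γ) / ((γ + 2) * (γ + 3)) := by
  have hbound := abs_trapezoid_error_le hT hγ0 hderiv hholder
  rw [sub_zero, add_comm γ 1] at hbound
  have hCt : 0 ≤ Ct * T ^ (1 + γ) := by
    have := (abs_nonneg _).trans hbound
    rwa [le_div_iff₀ (by positivity), zero_mul] at this
  exact hbound.trans (div_le_div_of_nonneg_left hCt (by positivity) (by nlinarith))

/-- Trapezoidal quadrature error for a C¹ function with γ-Hölder continuous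
derivative (Hölder constant C̃): the error of the trapezoid rule on [0,T] is
bounded by C̃ T^{1+γ} / ((γ+2)(γ+3)). -/
theorem trapezoid_quadrature_error
    (T : ℝ) (hT : 0 < T) (γ : ℝ) (hγ0 : 0 < γ) (hγ1 : γ ≤ 1)
    (Ct : ℝ) (hCt : 0 < Ct) (f f' : ℝ → ℝ)
    (hderiv : ∀ t ∈ Set.Icc (0:ℝ) T, HasDerivWithinAt f (f' t) (Set.Icc (0:ℝ) T) t)
    (hholder : ∀ s ∈ Set.Icc (0:ℝ) T, ∀ t ∈ Set.Icc (0:ℝ) T,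
      |f' t - f' s| ≤ Ct * |t - s| ^ γ) :
    |(f 0 + f T) / 2 - (1 / T) * ∫ ξ in (0:ℝ)..T, f ξ|
      ≤ Ct * T ^ (1 + γ) / ((γ + 2) * (γ + 3)) :=
  trapezoid_quadrature_error_general T hT γ hγ0 hγ1 Ct f f' hderiv hholder
end

section
/- Let W be a standard one-dimensional Brownian motion, k ∈ (0,1] with 1/k ∈ ℕ, t_n ∈ [0,1], t_{n+1} = t_n + k ≤ 2, and ΔŴ_n := k·W(t_{n+1}) - k² Σ_{ℓ=1}^{k^{-1}} W(t_n + ℓk²). Then for q = 1 and q = 2 there is a constant C > 0 (independent of k and n) such that E[|ΔŴ_n|^{2q}] ≤ C k^{3q}. -/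
open MeasureTheory ProbabilityTheory Filter

/-- A (standard, one-dimensional) Brownian motion on a probability space:
starts at 0, has continuous paths, Gaussian increments `W t - W s ~ N(0, t-s)`,
and independent increments. -/
structure IsBrownianMotion {Ω : Type} [MeasurableSpace Ω]
    (P : Measure Ω) (W : ℝ → Ω → ℝ) : Prop where
  measurable : ∀ t, Measurable (W t)
  start : ∀ ω, W 0 ω = 0
  cont : ∀ ω, Continuous fun t => W t ω
  gauss_incr : ∀ s t : ℝ, 0 ≤ s → s ≤ t →
    Measure.map (fun ω => W t ω - W s ω) P
      = gaussianReal 0 (Real.toNNReal (t - s))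
  indep_incr : ∀ (n : ℕ) (u : ℕ → ℝ), Monotone u →
    iIndepFun
      (fun i : Fin n => fun ω => W (u (i.1 + 1)) ω - W (u i.1) ω) P

/-- Left-endpoint Riemann sums, over the uniform partition of `[t₀, t₁]` into
`m` subintervals, for the Itô integral `∫_{t₀}^{t₁} (s - t₀) dW(s)`. -/
noncomputable def riemannSumLin {Ω : Type} (W : ℝ → Ω → ℝ) (t₀ t₁ : ℝ) (m : ℕ)
    (ω : Ω) : ℝ :=
  ∑ i ∈ Finset.range m,
    ((i : ℝ) * ((t₁ - t₀) / m)) *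
      (W (t₀ + ((i : ℝ) + 1) * ((t₁ - t₀) / m)) ω
        - W (t₀ + (i : ℝ) * ((t₁ - t₀) / m)) ω)

/-!
Since `k · m = 1`, the increment is `ΔŴ = k² ∑_{ℓ=1}^{m} (W(t + k) - W(t + ℓk²))`, an average of
`m` Brownian increments over time spans at most `k`, multiplied by `k`. Jensen's
inequality bounds `|∑ᵢ xᵢ|^{2q}` by `m^{2q-1} ∑ᵢ |xᵢ|^{2q}`, and Gaussian scaling gives
`E|W(t) - W(s)|^{2q} = (t - s)^q E|N(0,1)|^{2q}`, so `E|ΔŴ|^{2q} ≤ k^{4q} m^{2q} k^q E|N(0,1)|^{2q}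
= k^{3q} E|N(0,1)|^{2q}`.
-/

open Finset Real
open scoped NNReal

lemma integrable_abs_pow_gaussianReal (μ : ℝ) (v : ℝ≥0) (n : ℕ) :
    Integrable (fun x : ℝ => |x| ^ n) (gaussianReal μ v) := by
  simpa only [Real.norm_eq_abs, id] using
    (memLp_id_gaussianReal (μ := μ) (v := v) n).integrable_norm_pow'

lemma gaussianReal_zero_eq_map_sqrt_mul (v : ℝ≥0) :
    gaussianReal 0 v = (gaussianReal 0 1).map (√v * ·) := by
  rw [gaussianReal_map_const_mul, mul_zero, mul_one]
  congr
  ext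
  simp

lemma integral_abs_pow_gaussianReal_zero (v : ℝ≥0) (n : ℕ) :
    ∫ x, |x| ^ n ∂gaussianReal 0 v = √v ^ n * ∫ x, |x| ^ n ∂gaussianReal 0 1 := by
  rw [gaussianReal_zero_eq_map_sqrt_mul, integral_map (by fun_prop) (by fun_prop),
    ← integral_const_mul]
  simp_rw [abs_mul, mul_pow, abs_of_nonneg (Real.sqrt_nonneg _)]

namespace IsBrownianMotion

variable {Ω : Type} [MeasurableSpace Ω] {P : Measure Ω} {W : ℝ → Ω → ℝ} {s t : ℝ}

lemma integrable_abs_sub_pow (hW : IsBrownianMotion P W) (n : ℕ) (hs : 0 ≤ s) (hst : s ≤ t) :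
    Integrable (fun ω => |W t ω - W s ω| ^ n) P := by
  have hmeas : Measurable fun ω => W t ω - W s ω := (hW.measurable t).sub (hW.measurable s)
  refine (integrable_map_measure (g := fun x : ℝ => |x| ^ n) (by fun_prop)
    hmeas.aemeasurable).mp ?_
  rw [hW.gauss_incr s t hs hst]
  exact integrable_abs_pow_gaussianReal 0 _ n

lemma integral_abs_sub_pow (hW : IsBrownianMotion P W) (q : ℕ) (hs : 0 ≤ s) (hst : s ≤ t) :
    ∫ ω, |W t ω - W s ω| ^ (2 * q) ∂P
      = (t - s) ^ q * ∫ x, |x| ^ (2 * q) ∂gaussianReal 0 1 := by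
  have hmeas : Measurable fun ω => W t ω - W s ω := (hW.measurable t).sub (hW.measurable s)
  rw [← integral_map (f := fun x : ℝ => |x| ^ (2 * q)) hmeas.aemeasurable (by fun_prop),
    hW.gauss_incr s t hs hst, integral_abs_pow_gaussianReal_zero, pow_mul,
    Real.sq_sqrt (NNReal.coe_nonneg _), Real.coe_toNNReal _ (sub_nonneg.mpr hst)]

end IsBrownianMotion

lemma abs_sum_pow_le_card_pow_mul_sum {ι : Type*} (s : Finset ι) (f : ι → ℝ) {n : ℕ}
    (hn : n ≠ 0) : |∑ i ∈ s, f i| ^ n ≤ (#s : ℝ) ^ (n - 1) * ∑ i ∈ s, |f i| ^ n := by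
  obtain ⟨n, rfl⟩ := Nat.exists_eq_succ_of_ne_zero hn
  calc |∑ i ∈ s, f i| ^ (n + 1) ≤ (∑ i ∈ s, |f i|) ^ (n + 1) := by
        gcongr; exact abs_sum_le_sum_abs f s
    _ ≤ (#s : ℝ) ^ n * ∑ i ∈ s, |f i| ^ (n + 1) :=
        pow_sum_le_card_mul_sum_pow (fun i _ => abs_nonneg (f i)) n

lemma integral_abs_sum_pow_le {Ω ι : Type*} [MeasurableSpace Ω] {P : Measure Ω} (s : Finset ι)
    {X : ι → Ω → ℝ} {n : ℕ} (hn : n ≠ 0) {B : ℝ}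
    (hX : ∀ i ∈ s, Integrable (fun ω => |X i ω| ^ n) P)
    (hB : ∀ i ∈ s, ∫ ω, |X i ω| ^ n ∂P ≤ B) :
    ∫ ω, |∑ i ∈ s, X i ω| ^ n ∂P ≤ (#s : ℝ) ^ n * B := by
  calc ∫ ω, |∑ i ∈ s, X i ω| ^ n ∂P
      ≤ ∫ ω, (#s : ℝ) ^ (n - 1) * ∑ i ∈ s, |X i ω| ^ n ∂P :=
        integral_mono_of_nonneg (ae_of_all _ fun ω => by positivity)
          ((integrable_finsetSum s hX).const_mul _)
          (ae_of_all _ fun ω => abs_sum_pow_le_card_pow_mul_sum s _ hn)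
    _ = (#s : ℝ) ^ (n - 1) * ∑ i ∈ s, ∫ ω, |X i ω| ^ n ∂P := by
        rw [integral_const_mul, integral_finsetSum s hX]
    _ ≤ (#s : ℝ) ^ (n - 1) * (#s * B) := by
        gcongr
        simpa using sum_le_sum hB
    _ = (#s : ℝ) ^ n * B := by
        rw [← mul_assoc, pow_sub_one_mul hn]

lemma mul_sub_sq_mul_sum_eq {ι : Type*} (s : Finset ι) {k : ℝ} (hk : k * #s = 1) (a : ℝ)
    (f : ι → ℝ) : k * a - k ^ 2 * ∑ i ∈ s, f i = k ^ 2 * ∑ i ∈ s, (a - f i) := by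
  rw [sum_sub_distrib, sum_const, nsmul_eq_mul]
  linear_combination (-k * a) * hk

/-- The increment `ΔŴ_n` of the paper, with `t = t_n` and `m = 1 / k`. -/
noncomputable def hatIncrement {Ω : Type} (W : ℝ → Ω → ℝ) (m : ℕ) (k t : ℝ) (ω : Ω) : ℝ :=
  k * W (t + k) ω - k ^ 2 * ∑ ℓ ∈ Icc 1 m, W (t + (ℓ : ℝ) * k ^ 2) ω

lemma IsBrownianMotion.integral_abs_hatIncrement_pow_le {Ω : Type} [MeasurableSpace Ω]
    {P : Measure Ω} {W : ℝ → Ω → ℝ} (hW : IsBrownianMotion P W) {q : ℕ} (hq : q ≠ 0)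
    {m : ℕ} {k t : ℝ} (hkm : k * m = 1) (ht : 0 ≤ t) :
    ∫ ω, |hatIncrement W m k t ω| ^ (2 * q) ∂P
      ≤ (∫ x, |x| ^ (2 * q) ∂gaussianReal 0 1) * k ^ (3 * q) := by
  have hcard : #(Icc 1 m) = m := by simp
  have hk : 0 < k := pos_of_mul_pos_left (hkm ▸ one_pos) m.cast_nonneg
  have hspan : ∀ ℓ ∈ Icc 1 m, 0 ≤ k - ℓ * k ^ 2 ∧ k - ℓ * k ^ 2 ≤ k := by
    intro ℓ hℓ
    have hℓm : (ℓ : ℝ) ≤ m := by exact_mod_cast (mem_Icc.mp hℓ).2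
    constructor <;> nlinarith [sq_nonneg k]
  set c := ∫ x, |x| ^ (2 * q) ∂gaussianReal 0 1
  have hincr : ∀ ℓ ∈ Icc 1 m,
      ∫ ω, |W (t + k) ω - W (t + ℓ * k ^ 2) ω| ^ (2 * q) ∂P ≤ k ^ q * c := by
    intro ℓ hℓ
    rw [hW.integral_abs_sub_pow q (by positivity) (by linarith [(hspan ℓ hℓ).1])]
    gcongr
    · linarith [(hspan ℓ hℓ).1]
    · linarith [(hspan ℓ hℓ).2]
  have hsum := integral_abs_sum_pow_le (Icc 1 m) (by omega) (fun ℓ hℓ =>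
      hW.integrable_abs_sub_pow (2 * q) (s := t + ℓ * k ^ 2) (t := t + k) (by positivity)
        (by linarith [(hspan ℓ hℓ).1])) hincr
  rw [hcard] at hsum
  simp only [hatIncrement, mul_sub_sq_mul_sum_eq _ (hcard ▸ hkm), abs_mul, mul_pow,
    abs_of_nonneg (sq_nonneg k)]
  rw [integral_const_mul]
  calc (k ^ 2) ^ (2 * q) * ∫ ω, |∑ ℓ ∈ Icc 1 m, (W (t + k) ω - W (t + ℓ * k ^ 2) ω)| ^ (2 * q) ∂P
      ≤ (k ^ 2) ^ (2 * q) * ((m : ℝ) ^ (2 * q) * (k ^ q * c)) := by gcongr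
    _ = (k * m) ^ (2 * q) * c * k ^ (3 * q) := by ring
    _ = c * k ^ (3 * q) := by rw [hkm]; ring

/-- There is a constant `C > 0` (independent of `k` and `n`) such that for
`q = 1` and `q = 2`, any Brownian motion `W`, any `k ∈ (0,1]` with `1/k ∈ ℕ`
and any `t_n ∈ [0,1]` (so `t_{n+1} = t_n + k ≤ 2`), the implementable
increment `ΔŴ_n = k·W(t_{n+1}) - k² Σ_{ℓ=1}^{1/k} W(t_n + ℓ k²)` satisfies
`E[|ΔŴ_n|^{2q}] ≤ C k^{3q}`. -/
theorem hat_increment_moments :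
    ∃ C : ℝ, 0 < C ∧
      ∀ (Ω : Type) [MeasurableSpace Ω] (P : Measure Ω) [IsProbabilityMeasure P]
        (W : ℝ → Ω → ℝ), IsBrownianMotion P W →
      ∀ q : ℕ, (q = 1 ∨ q = 2) →
      ∀ (m : ℕ) (k tn : ℝ), 0 < m → 0 < k → k ≤ 1 → k = 1 / m →
        0 ≤ tn → tn ≤ 1 → tn + k ≤ 2 →
        ∫ ω, |k * W (tn + k) ω
            - k ^ 2 * ∑ ℓ ∈ Finset.Icc 1 m, W (tn + (ℓ : ℝ) * k ^ 2) ω| ^ (2 * q) ∂P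
          ≤ C * k ^ (3 * q) := by
  have hmoment (n : ℕ) : 0 ≤ ∫ x, |x| ^ n ∂gaussianReal 0 1 :=
    integral_nonneg fun x => by positivity
  refine ⟨(∫ x, |x| ^ (2 * 1) ∂gaussianReal 0 1) + (∫ x, |x| ^ (2 * 2) ∂gaussianReal 0 1) + 1,
    by linarith [hmoment (2 * 1), hmoment (2 * 2)], ?_⟩
  intro Ω _ P _ W hW q hq m k tn hm _ _ hkm htn _ _
  have hkm' : k * m = 1 := by rw [hkm]; field_simp
  refine (hW.integral_abs_hatIncrement_pow_le (by omega) hkm' htn).trans ?_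
  gcongr
  rcases hq with rfl | rfl <;> linarith [hmoment (2 * 1), hmoment (2 * 2)]
end
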